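/- arXiv:2101.08648 — 2 statements merged into one kernel-verified Lean document; each statement's English description precedes it below -/
import Mathlib

section
/- Let H be a finite simple graph, let r ≥ 1 be an integer, and suppose girth(H) > 4r. Fix a vertex u ∈ V(H), let B = {w ∈ V(H) : dist_H(u, w) ≤ r − 1}, and let x and y be two distinct vertices with dist_H(u, x) = dist_H(u, y) = r. Then every path from x to y in the induced subgraph of H on V(H) ∖ B has length greater than 2r; i.e., the distance between x and y in H with the vertex set B removed is greater than 2r. -/
open Classical

set_option linter.unusedSectionVars false

noncomputable section

namespace Formal

variable {V : Type*} [Fintype V] [DecidableEq V]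

/-- The real adjacency matrix of a finite simple graph. -/
def adjMat (G : SimpleGraph V) : Matrix V V ℝ :=
  letI := Classical.decRel G.Adj
  SimpleGraph.adjMatrix ℝ G

lemma adjMat_isHermitian (G : SimpleGraph V) : (adjMat G).IsHermitian := by
  letI := Classical.decRel G.Adj
  unfold adjMat
  rw [Matrix.IsHermitian, Matrix.conjTranspose_eq_transpose_of_trivial]
  exact SimpleGraph.isSymm_adjMatrix G

/-- `G` is `k`-regular: every vertex has exactly `k` neighbours. -/
def IsRegular (G : SimpleGraph V) (k : ℕ) : Prop :=
  ∀ v : V, (G.neighborSet v).ncard = k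

/-- The eigenvalues (with multiplicity) of the adjacency matrix, indexed by vertices. -/
def eigs (G : SimpleGraph V) : V → ℝ :=
  (adjMat_isHermitian G).eigenvalues

/-- The absolute values of the adjacency eigenvalues, sorted in increasing order. -/
def sortedAbsEigs (G : SimpleGraph V) : List ℝ :=
  (Finset.univ.val.map fun i => |eigs G i|).sort (· ≤ ·)

/-- `λ(G)`: the second largest absolute value of an eigenvalue (with multiplicity). -/
def secondLargestAbsEig (G : SimpleGraph V) : ℝ :=
  (sortedAbsEigs G).getD (Fintype.card V - 2) 0

/-- `λ₃(G)`: the third largest absolute value of an eigenvalue (with multiplicity). -/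
def thirdLargestAbsEig (G : SimpleGraph V) : ℝ :=
  (sortedAbsEigs G).getD (Fintype.card V - 3) 0

/-- `μ` has a `(k, ε)`-localized (ℓ²-normalized) eigenvector for `A(G)`. -/
def HasLocalizedEigenvector (G : SimpleGraph V) (μ : ℝ) (k : ℕ) (ε : ℝ) : Prop :=
  ∃ v : V → ℝ, (adjMat G).mulVec v = μ • v ∧ (∑ x, (v x) ^ 2) = 1 ∧
    ∃ S : Finset V, S.card = k ∧ ε ≤ ∑ x ∈ S, (v x) ^ 2

/-- There are `r` distinct eigenvalues of `A(G)`, each with a `(k, ε)`-localized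
eigenvector for some `k ≤ bound`. -/
def LocalizedSpectrum (G : SimpleGraph V) (r : ℕ) (ε bound : ℝ) : Prop :=
  ∃ Λ : Finset ℝ, Λ.card = r ∧
    ∀ μ ∈ Λ, ∃ k : ℕ, (k : ℝ) ≤ bound ∧ HasLocalizedEigenvector G μ k ε

/-- `girth(G) ≥ x` for a real number `x` (`girth = ⊤` counts as `≥ x`). -/
def girthGe {W : Type*} (G : SimpleGraph W) (x : ℝ) : Prop :=
  ∀ g : ℕ, G.girth = g → x ≤ g

/-- `girth(G) > x` for a real number `x` (`girth = ⊤` counts as `> x`). -/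
def girthGt {W : Type*} (G : SimpleGraph W) (x : ℝ) : Prop :=
  ∀ g : ℕ, G.girth = g → x < g

/-- The `j`-th prime, so `nthPrime 1 = 2`, `nthPrime 2 = 3`, ..., `nthPrime 10 = 29`. -/
def nthPrime (j : ℕ) : ℕ :=
  Nat.nth Nat.Prime (j - 1)

/-!
Let `P` be a path of length `m` from `x` to `y` avoiding the open ball of radius `r` about `u`.
At step `i` of `P` the distance to `u` is at most `min (r + i) (r + m - i)`, so any two geodesics
from `u` to neighbouring vertices of `P` close up into a walk of length at most `2r + m`. If that
is below the girth, geodesics from `u` are unique and no edge joins two vertices equidistant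
from `u`. Hence a vertex of `P` farthest from `u` is not an end (else the first edge of `P` would
join two vertices at distance `r`), and both its neighbours on `P` are the penultimate vertex of
its geodesic: impossible on a path. So `girth ≤ 2r + m`, and `m ≤ 2r` would force `girth ≤ 4r`.
-/

section Girth

open SimpleGraph Walk

variable {W : Type*} {G : SimpleGraph W}

lemma IsPath.eq_of_length_add_length_lt_egirth {a b : W} {p q : G.Walk a b}
    (hp : p.IsPath) (hq : q.IsPath) (hlt : ((p.length + q.length : ℕ) : ℕ∞) < G.egirth) :
    p = q := by
  by_contra hne
  obtain ⟨_, _, _, c, hc, hlen⟩ := hp.exists_isCycle_length_le_add_of_ne hq hne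
  exact (egirth_le_length hc).not_gt ((Nat.cast_le.mpr hlen).trans_lt hlt)

lemma eq_concat_of_adj_of_dist_le {u a v : W} {p : G.Walk u a} {q : G.Walk u v}
    (hp : p.length = G.dist u a) (hq : q.length = G.dist u v) (hav : G.Adj a v)
    (hle : G.dist u a ≤ G.dist u v)
    (hlt : ((G.dist u a + G.dist u v + 1 : ℕ) : ℕ∞) < G.egirth) :
    q = p.concat hav := by
  have hv : v ∉ p.support := fun hv => by
    have := p.length_takeUntil_lt_length hv hav.ne'
    have := G.dist_le (p.takeUntil v hv)
    omega
  refine IsPath.eq_of_length_add_length_lt_egirth (q.isPath_of_length_eq_dist hq)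
    ((p.isPath_of_length_eq_dist hp).concat hv hav) ?_
  rwa [length_concat, hp, hq, Nat.add_comm, Nat.add_right_comm]

lemma dist_eq_add_one_of_adj_of_dist_le {u a v : W} (hv : G.Reachable u v) (hav : G.Adj a v)
    (hle : G.dist u a ≤ G.dist u v)
    (hlt : ((G.dist u a + G.dist u v + 1 : ℕ) : ℕ∞) < G.egirth) :
    G.dist u v = G.dist u a + 1 := by
  obtain ⟨p, hp⟩ := (hv.trans hav.symm.reachable).exists_walk_length_eq_dist
  obtain ⟨q, hq⟩ := hv.exists_walk_length_eq_dist
  rw [← hp, ← hq, eq_concat_of_adj_of_dist_le hp hq hav hle hlt, length_concat]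

lemma eq_of_adj_of_adj_of_dist_le {u a b v : W} (hv : G.Reachable u v)
    (hav : G.Adj a v) (hbv : G.Adj b v)
    (ha : G.dist u a ≤ G.dist u v) (hb : G.dist u b ≤ G.dist u v)
    (hlta : ((G.dist u a + G.dist u v + 1 : ℕ) : ℕ∞) < G.egirth)
    (hltb : ((G.dist u b + G.dist u v + 1 : ℕ) : ℕ∞) < G.egirth) :
    a = b := by
  obtain ⟨pa, hpa⟩ := (hv.trans hav.symm.reachable).exists_walk_length_eq_dist
  obtain ⟨pb, hpb⟩ := (hv.trans hbv.symm.reachable).exists_walk_length_eq_dist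
  obtain ⟨q, hq⟩ := hv.exists_walk_length_eq_dist
  have hqa := congrArg penultimate (eq_concat_of_adj_of_dist_le hpa hq hav ha hlta)
  have hqb := congrArg penultimate (eq_concat_of_adj_of_dist_le hpb hq hbv hb hltb)
  rw [penultimate_concat] at hqa hqb
  exact hqa.symm.trans hqb

lemma dist_getVert_le_dist_start_add {u x y : W} (hx : G.Reachable u x) (p : G.Walk x y)
    (i : ℕ) : G.dist u (p.getVert i) ≤ G.dist u x + i := by
  have hwalk : G.dist x (p.getVert i) ≤ i := (G.dist_le (p.take i)).trans (by simp)
  exact (hx.dist_triangle_left _).trans (by omega)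

lemma dist_getVert_le_dist_end_add {u x y : W} (hy : G.Reachable u y) (p : G.Walk x y)
    (i : ℕ) : G.dist u (p.getVert i) ≤ G.dist u y + (p.length - i) := by
  have hwalk : G.dist y (p.getVert i) ≤ p.length - i :=
    dist_comm.trans_le ((G.dist_le (p.drop i)).trans_eq (drop_length ..))
  exact (hy.dist_triangle_left _).trans (by omega)

lemma egirth_le_of_isPath_of_le_dist {u x y : W} {r : ℕ} {P : G.Walk x y} (hP : P.IsPath)
    (hxy : x ≠ y) (hx : G.Reachable u x) (hdx : G.dist u x = r) (hdy : G.dist u y = r)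
    (hball : ∀ w ∈ P.support, r ≤ G.dist u w) :
    G.egirth ≤ ((2 * r + P.length : ℕ) : ℕ∞) := by
  by_contra! hlt
  set m := P.length
  have hreach (i : ℕ) : G.Reachable u (P.getVert i) := hx.trans (P.take i).reachable
  have hge (i : ℕ) : r ≤ G.dist u (P.getVert i) := hball _ (P.getVert_mem_support i)
  have hle_x (i : ℕ) : G.dist u (P.getVert i) ≤ r + i :=
    hdx ▸ dist_getVert_le_dist_start_add hx P i
  have hle_y (i : ℕ) : G.dist u (P.getVert i) ≤ r + (m - i) :=
    hdy ▸ dist_getVert_le_dist_end_add (hx.trans P.reachable) P i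
  have hm : 1 ≤ m := Nat.one_le_iff_ne_zero.mpr fun h => hxy (P.eq_of_length_eq_zero h)
  have hshort {k : ℕ} (hk : k ≤ 2 * r + m) : (k : ℕ∞) < G.egirth :=
    lt_of_le_of_lt (Nat.cast_le.mpr hk) hlt
  obtain ⟨i₀, hi₀, hmax⟩ := (Finset.range (m + 1)).exists_max_image
    (fun i => G.dist u (P.getVert i)) ⟨0, by simp⟩
  simp only [Finset.mem_range] at hi₀ hmax
  rcases (hge i₀).eq_or_lt with hflat | hpeak
  · have h1 : G.dist u (P.getVert 1) = r :=
      le_antisymm (hflat ▸ hmax 1 (by omega)) (hge 1)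
    have := dist_eq_add_one_of_adj_of_dist_le (hreach 1) (P.adj_getVert_succ hm)
      (by simp [hdx, h1]) (hshort (by rw [getVert_zero, hdx, h1]; omega))
    simp [hdx, h1] at this
  · have h0 : i₀ ≠ 0 := by rintro rfl; simp [hdx] at hpeak
    have hm₀ : i₀ ≠ m := by rintro rfl; simp [m, hdy] at hpeak
    have hprev := P.adj_getVert_succ (i := i₀ - 1) (by omega)
    rw [Nat.sub_add_cancel (by omega)] at hprev
    have := eq_of_adj_of_adj_of_dist_le (hreach i₀) hprev (P.adj_getVert_succ (by omega)).symm
      (hmax _ (by omega)) (hmax _ (by omega))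
      (hshort (by have := hle_x (i₀ - 1); have := hle_y i₀; omega))
      (hshort (by have := hle_x i₀; have := hle_y (i₀ + 1); omega))
    have := hP.getVert_injOn (show i₀ - 1 ≤ m by omega) (show i₀ + 1 ≤ m by omega) this
    omega

end Girth

theorem stmt_11_general {V : Type*} [DecidableEq V]
    (H : SimpleGraph V) (r : ℕ)
    (hgirth : ((4 * r : ℕ) : ℕ∞) < H.girth)
    (u x y : V) (hxy : x ≠ y)
    (hx : H.Reachable u x ∧ H.dist u x = r)
    (hy : H.Reachable u y ∧ H.dist u y = r)
    (p : H.Walk x y)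
    (hp : ∀ w ∈ p.support, ¬ (H.Reachable u w ∧ H.dist u w ≤ r - 1)) :
    2 * r < p.length := by
  have hball : ∀ w ∈ p.bypass.support, r ≤ H.dist u w := fun w hw => by
    have hw := p.support_bypass_subset_support hw
    have := not_and.mp (hp w hw) (hx.1.trans (p.takeUntil w hw).reachable)
    omega
  have hcycle := egirth_le_of_isPath_of_le_dist p.bypass_isPath hxy hx.1 hx.2 hy.2 hball
  have hegirth : ((4 * r : ℕ) : ℕ∞) < H.egirth := hgirth.trans_le (ENat.natCast_toNat_le_self _)
  have := p.length_bypass_le_length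
  by_contra! hlen
  exact (hcycle.trans (Nat.cast_le.mpr (by omega))).not_gt hegirth

/-- in a graph of girth `> 4r`, two distinct vertices at distance `r`
from `u` are at distance `> 2r` once the ball of radius `r - 1` around `u` is
removed.  (A walk avoiding the ball `B` is exactly a walk in the induced subgraph
on the complement of `B`.) -/
theorem stmt_11 {V : Type*} [Fintype V] [DecidableEq V]
    (H : SimpleGraph V) (r : ℕ) (hr : 1 ≤ r)
    (hgirth : ((4 * r : ℕ) : ℕ∞) < H.girth)
    (u x y : V) (hxy : x ≠ y)
    (hx : H.Reachable u x ∧ H.dist u x = r)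
    (hy : H.Reachable u y ∧ H.dist u y = r)
    (p : H.Walk x y)
    (hp : ∀ w ∈ p.support, ¬ (H.Reachable u w ∧ H.dist u w ≤ r - 1)) :
    2 * r < p.length :=
  stmt_11_general H r hgirth u x y hxy hx hy p hp

end Formal
end
end

section
/- Let t, d, p be real numbers with 2 ≤ t ≤ d ≤ p and p − t ≤ (5/(2√6) − 1)·√t. Then 2√p + (p − d) ≤ (5/√6)·√d. -/
open Classical

set_option linter.unusedSectionVars false

noncomputable section

namespace Formal

variable {V : Type*} [Fintype V] [DecidableEq V]

/- With `c = 5/(2√6) - 1 ≥ 0` we have `5/√6 = 2c + 2`. Since `x ↦ x + c√x` is monotone,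
the gap hypothesis gives `p ≤ d + c√d`; as `d ≥ 1` this is at most `d + c d ≤ (1 + c/2)² d`,
so `2√p ≤ (c + 2)√d`, while `p - d ≤ c√d`. -/

lemma add_mul_sqrt_le_add_mul_sqrt {c t d : ℝ} (hc : 0 ≤ c) (htd : t ≤ d) :
    t + c * √t ≤ d + c * √d := by
  gcongr

lemma sqrt_le_of_le_add_mul_sqrt {c d p : ℝ} (hc : 0 ≤ c) (hd : 1 ≤ d)
    (hp : p ≤ d + c * √d) : √p ≤ (1 + c / 2) * √d := by
  have hsq : (√d) ^ 2 = d := Real.sq_sqrt (by linarith)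
  have hsqrt_le : √d ≤ d := by nlinarith [Real.one_le_sqrt.mpr hd]
  rw [Real.sqrt_le_left (by positivity)]
  nlinarith [mul_le_mul_of_nonneg_left hsqrt_le hc,
    mul_nonneg (mul_nonneg hc hc) (by linarith : 0 ≤ d)]

lemma two_mul_sqrt_add_sub_le {c d p : ℝ} (hc : 0 ≤ c) (hd : 1 ≤ d)
    (hp : p ≤ d + c * √d) : 2 * √p + (p - d) ≤ (2 * c + 2) * √d := by
  linarith [sqrt_le_of_le_add_mul_sqrt hc hd hp]

lemma one_le_five_div_two_mul_sqrt_six : 1 ≤ 5 / (2 * √6) := by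
  have h : √6 ≤ 5 / 2 := Real.sqrt_le_left (by norm_num) |>.mpr (by norm_num)
  rw [le_div_iff₀ (by positivity)]
  linarith

lemma five_div_sqrt_six_eq : 5 / √6 = 2 * (5 / (2 * √6) - 1) + 2 := by
  field_simp
  ring

theorem stmt_13_general (t d p : ℝ) (ht : 2 ≤ t) (htd : t ≤ d)
    (hgap : p - t ≤ (5 / (2 * Real.sqrt 6) - 1) * Real.sqrt t) :
    2 * Real.sqrt p + (p - d) ≤ (5 / Real.sqrt 6) * Real.sqrt d := by
  set c := 5 / (2 * √6) - 1
  have hc : 0 ≤ c := sub_nonneg.mpr one_le_five_div_two_mul_sqrt_six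
  have hp : p ≤ d + c * √d := by linarith [add_mul_sqrt_le_add_mul_sqrt hc htd]
  rw [five_div_sqrt_six_eq]
  exact two_mul_sqrt_add_sub_le hc (by linarith) hp

/-- the numerical inequality behind Proposition 2.4. -/
theorem stmt_13 (t d p : ℝ) (ht : 2 ≤ t) (htd : t ≤ d) (hdp : d ≤ p)
    (hgap : p - t ≤ (5 / (2 * Real.sqrt 6) - 1) * Real.sqrt t) :
    2 * Real.sqrt p + (p - d) ≤ (5 / Real.sqrt 6) * Real.sqrt d :=
  stmt_13_general t d p ht htd hgap

end Formal
end
end
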